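/- Let q be a primitive m-th root of unity in K and λ₁, λ₂ ∈ K nonzero, and let M(λ) be the Verma module for Mat₂(q) with basis {f(a,b) : 0 ≤ a ≤ m−1, b ∈ ℕ}. For p ≥ 1 let M_{p,m} be the K-span of {f(a,b) : 0 ≤ a ≤ m−1, b ≥ pm}. Then every Mat₂(q)-submodule W of M(λ) containing M_{p,m} is equal either to M(λ) or to M_{r,m} for some 1 ≤ r ≤ p. -/

import Mathlib

noncomputable section

open FreeAlgebra MulOpposite

/-- The relations of the Dipper–Donkin quantized matrix algebra of rank 2:
`Z12·Z11 = Z11·Z12`, `Z21·Z11 = q·Z11·Z21`, `Z22·Z21 = Z21·Z22`, `Z22·Z12 = q·Z12·Z22`,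
`Z21·Z12 = q·Z12·Z21`, `Z22·Z11 = Z11·Z22 + (q−1)·Z12·Z21`, where the generators
`Z11, Z12, Z21, Z22` are the images of `0, 1, 2, 3 : Fin 4`. -/
inductive DDrel {K : Type*} [Field K] (q : K) :
    FreeAlgebra K (Fin 4) → FreeAlgebra K (Fin 4) → Prop
  | r1 : DDrel q (ι K (1 : Fin 4) * ι K (0 : Fin 4)) (ι K (0 : Fin 4) * ι K (1 : Fin 4))
  | r2 : DDrel q (ι K (2 : Fin 4) * ι K (0 : Fin 4)) (q • (ι K (0 : Fin 4) * ι K (2 : Fin 4)))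
  | r3 : DDrel q (ι K (3 : Fin 4) * ι K (2 : Fin 4)) (ι K (2 : Fin 4) * ι K (3 : Fin 4))
  | r4 : DDrel q (ι K (3 : Fin 4) * ι K (1 : Fin 4)) (q • (ι K (1 : Fin 4) * ι K (3 : Fin 4)))
  | r5 : DDrel q (ι K (2 : Fin 4) * ι K (1 : Fin 4)) (q • (ι K (1 : Fin 4) * ι K (2 : Fin 4)))
  | r6 : DDrel q (ι K (3 : Fin 4) * ι K (0 : Fin 4))
      (ι K (0 : Fin 4) * ι K (3 : Fin 4) + (q - 1) • (ι K (1 : Fin 4) * ι K (2 : Fin 4)))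

/-- The Dipper–Donkin quantized matrix algebra `Mat₂(q)`: the quotient of the free
`K`-algebra on four generators by the two-sided ideal generated by the relations above. -/
abbrev DDMat2 {K : Type*} [Field K] (q : K) := RingQuot (DDrel q)

variable {K : Type*} [Field K]

/-- The generator `Z11` of `Mat₂(q)`. -/
def Z11 (q : K) : DDMat2 q := RingQuot.mkAlgHom K (DDrel q) (ι K (0 : Fin 4))
/-- The generator `Z12` of `Mat₂(q)`. -/
def Z12 (q : K) : DDMat2 q := RingQuot.mkAlgHom K (DDrel q) (ι K (1 : Fin 4))
/-- The generator `Z21` of `Mat₂(q)`. -/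
def Z21 (q : K) : DDMat2 q := RingQuot.mkAlgHom K (DDrel q) (ι K (2 : Fin 4))
/-- The generator `Z22` of `Mat₂(q)`. -/
def Z22 (q : K) : DDMat2 q := RingQuot.mkAlgHom K (DDrel q) (ι K (3 : Fin 4))

/-- The underlying space of the Verma module `M(λ)`: the `K`-vector space with basis
`f(a,b)`, `a : Fin m`, `b : ℕ`, realized as finitely supported functions. -/
abbrev VermaSpace (K : Type*) [Field K] (m : ℕ) := ((Fin m × ℕ) →₀ K)

variable (q la lb : K) (m : ℕ) [NeZero m]

/-- The action of `Z11` on the Verma module `M(λ)`: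
`f(a,b)·Z11 = 0` if `b = 0` and `λ₁·q^a·(q^b − 1)·f(a+1,b−1)` if `b ≥ 1`, where `f(m,c)`
is interpreted as `λ₂·f(0,c)` (addition in `Fin m` is cyclic). -/
noncomputable def VF11 : VermaSpace K m →ₗ[K] VermaSpace K m :=
  Finsupp.linearCombination K fun p : Fin m × ℕ =>
    if p.2 = 0 then 0 else
      ((if (p.1 : ℕ) = m - 1 then lb else 1) * la * q ^ (p.1 : ℕ) * (q ^ p.2 - 1)) •
        Finsupp.single (p.1 + 1, p.2 - 1) (1 : K)

/-- The action of `Z12` on the Verma module: `f(a,b)·Z12 = q^{a+b}·λ₁·f(a,b)`. -/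
noncomputable def VF12 : VermaSpace K m →ₗ[K] VermaSpace K m :=
  Finsupp.linearCombination K fun p : Fin m × ℕ =>
    (q ^ ((p.1 : ℕ) + p.2) * la) • Finsupp.single p (1 : K)

/-- The action of `Z21` on the Verma module:
`f(a,b)·Z21 = f(a+1,b)` if `a ≤ m−2` and `λ₂·f(0,b)` if `a = m−1`. -/
noncomputable def VF21 : VermaSpace K m →ₗ[K] VermaSpace K m :=
  Finsupp.linearCombination K fun p : Fin m × ℕ =>
    (if (p.1 : ℕ) = m - 1 then lb else 1) • Finsupp.single (p.1 + 1, p.2) (1 : K)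

/-- The action of `Z22` on the Verma module: `f(a,b)·Z22 = f(a,b+1)`. -/
noncomputable def VF22 : VermaSpace K m →ₗ[K] VermaSpace K m :=
  Finsupp.linearCombination K fun p : Fin m × ℕ =>
    Finsupp.single (p.1, p.2 + 1) (1 : K)

/-- The subspace `M_{p,m}` of the Verma module, spanned by the basis vectors `f(a,b)`
with `b ≥ p·m`. -/
def Mpm (p : ℕ) : Submodule K (VermaSpace K m) :=
  Submodule.span K
    {v : VermaSpace K m | ∃ (a : Fin m) (b : ℕ), p * m ≤ b ∧ v = Finsupp.single (a, b) (1 : K)}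

/-!
The two diagonal operators `Z12` and `D = Z22·Z11·Z21^(m-1)` act on `f(a,b)` by the scalars
`λ₁ q^(a+b)` and `λ₁ λ₂ q^a (q^(b+1) - 1)`; since `q` is a primitive `m`-th root of unity, this
pair of eigenvalues determines `a` and `b mod m`, so a submodule `W` contains the component of
each of its vectors along every class `{f(a,b') : b' ≡ b [MOD m]}`. Conversely, from a single
basis vector `f(a,b) ∈ W` one reaches every `f(a',b')` with `b' ≥ ⌊b/m⌋ m`: `Z21` rotates `a`,
`Z22` raises `b`, and `Z11` lowers `b` as long as `b` is not a multiple of `m`.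

If `r` is least with `M_{r,m} ⊆ W` and some `w ∈ W` has a component below level `r m`, take such
a component `f(a,b)` with `b` minimal, project `w` onto the class of `(a,b)` and shift it up
`s` levels by `Z22^s` so that `b + s` lands in `[(r-1)m, rm)`. All other components of the result
then lie in `M_{r,m} ⊆ W`, so `f(a, b + s) ∈ W` and hence `M_{r-1,m} ⊆ W`, contradicting
minimality.
-/

open scoped Fin.NatCast Fin.CommRing

section Diagonal

variable {ι : Type*} {T : (ι →₀ K) →ₗ[K] (ι →₀ K)} {d : ι → K}

theorem diagonal_apply_eq_mul (hT : ∀ i, T (Finsupp.single i 1) = d i • Finsupp.single i 1)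
    (w : ι →₀ K) (i : ι) : T w i = d i * w i := by
  induction w using Finsupp.induction_linear with
  | zero => simp
  | add f g hf hg => simp [hf, hg, mul_add]
  | single j c =>
    rw [← Finsupp.smul_single_one, map_smul, hT, smul_smul]
    by_cases h : j = i <;> simp [h, mul_comm]

open scoped Classical in
theorem filter_mem_of_diagonal (hT : ∀ i, T (Finsupp.single i 1) = d i • Finsupp.single i 1)
    {W : Submodule K (ι →₀ K)} (hW : ∀ v ∈ W, T v ∈ W) (μ : K) {w : ι →₀ K} (hw : w ∈ W) :
    w.filter (fun i => d i = μ) ∈ W := by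
  suffices key : ∀ s : Finset ι, ∀ w ∈ W, (∀ i ∈ w.support, d i ≠ μ → i ∈ s) →
      w.filter (fun i => d i = μ) ∈ W from key w.support w hw fun i hi _ => hi
  intro s
  induction s using Finset.induction_on with
  | empty =>
    intro w hw hs
    rwa [(Finsupp.filter_eq_self_iff _ _).2 fun i hi => not_not.1 fun h =>
      Finset.notMem_empty i (hs i (Finsupp.mem_support_iff.2 hi) h)]
  | insert j s _ ih =>
    intro w hw hs
    by_cases hdj : d j = μ
    · refine ih w hw fun i hi hne => ?_
      rcases Finset.mem_insert.1 (hs i hi hne) with rfl | h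
      · exact absurd hdj hne
      · exact h
    -- `(T - d j) w` has lost the component at `j` and is a multiple of `w` on the `μ`-eigenspace.
    have happ : ∀ i, (T w - d j • w) i = (d i - d j) * w i := fun i => by
      simp [diagonal_apply_eq_mul hT, sub_mul]
    have hfilter : (T w - d j • w).filter (fun i => d i = μ) =
        (μ - d j) • w.filter (fun i => d i = μ) := by
      ext i
      rw [Finsupp.smul_apply, Finsupp.filter_apply, Finsupp.filter_apply, happ]
      by_cases h : d i = μ <;> simp [h]
    have hmem := ih _ (W.sub_mem (hW w hw) (W.smul_mem _ hw)) fun i hi hne => by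
      have hi' : (d i - d j) * w i ≠ 0 := happ i ▸ Finsupp.mem_support_iff.1 hi
      rcases Finset.mem_insert.1 (hs i (Finsupp.mem_support_iff.2 (right_ne_zero_of_mul hi')) hne)
        with rfl | h
      · simp at hi'
      · exact h
    rw [hfilter] at hmem
    simpa [smul_smul, inv_mul_cancel₀ (sub_ne_zero.2 (Ne.symm hdj))] using
      W.smul_mem (μ - d j)⁻¹ hmem

end Diagonal

theorem Submodule.single_one_mem_of_support_subset {ι : Type*} {W : Submodule K (ι →₀ K)}
    {s : Set ι} (hs : Finsupp.supported K K s ≤ W) {v : ι →₀ K} (hv : v ∈ W) {i : ι}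
    (hi : v i ≠ 0) (hsupp : ∀ j ∈ v.support, j ≠ i → j ∈ s) : Finsupp.single i 1 ∈ W := by
  classical
  have herase : v.erase i ∈ W := hs <| (Finsupp.mem_supported K _).2 fun j hj => by
    rw [Finset.mem_coe, Finsupp.support_erase, Finset.mem_erase] at hj
    exact hsupp j hj.2 hj.1
  have hsingle : Finsupp.single i (v i) ∈ W := by
    rw [← add_sub_cancel_right (Finsupp.single i (v i)) (v.erase i), Finsupp.single_add_erase]
    exact W.sub_mem hv herase
  simpa [Finsupp.smul_single, inv_mul_cancel₀ hi] using W.smul_mem (v i)⁻¹ hsingle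

section Operators

variable {q la lb : K} {m : ℕ}

theorem VF11_single_succ [NeZero m] (a : Fin m) (b : ℕ) :
    VF11 q la lb m (Finsupp.single (a, b + 1) 1) =
      ((if (a : ℕ) = m - 1 then lb else 1) * la * q ^ (a : ℕ) * (q ^ (b + 1) - 1)) •
        Finsupp.single (a + 1, b) 1 := by
  simp [VF11]

theorem VF12_single (i : Fin m × ℕ) :
    VF12 q la m (Finsupp.single i 1) = (q ^ ((i.1 : ℕ) + i.2) * la) • Finsupp.single i 1 := by
  simp [VF12]

theorem VF21_single [NeZero m] (a : Fin m) (b : ℕ) :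
    VF21 lb m (Finsupp.single (a, b) 1) =
      (if (a : ℕ) = m - 1 then lb else 1) • Finsupp.single (a + 1, b) 1 := by
  simp [VF21]

theorem VF22_apply (v : VermaSpace K m) :
    VF22 m v = v.mapDomain fun i => (i.1, i.2 + 1) := by
  induction v using Finsupp.induction_linear with
  | zero => simp
  | add f g hf hg => simp [hf, hg, Finsupp.mapDomain_add]
  | single i c => simp [VF22, Finsupp.mapDomain_single, Finsupp.smul_single]

theorem VF22_pow_apply (s : ℕ) (v : VermaSpace K m) :
    (VF22 m ^ s) v = v.mapDomain fun i => (i.1, i.2 + s) := by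
  induction s with
  | zero => exact Finsupp.mapDomain_id.symm
  | succ s ih =>
    rw [pow_succ', Module.End.mul_apply, ih, VF22_apply, ← Finsupp.mapDomain_comp]
    rfl

theorem Fin.val_add_one_eq_mod [NeZero m] (a : Fin m) :
    ((a + 1 : Fin m) : ℕ) = ((a : ℕ) + 1) % m := by
  rw [Fin.val_add, Fin.val_one', Nat.add_mod_mod]

theorem VF21_pow_single [NeZero m] (k : ℕ) (a : Fin m) (b : ℕ) :
    (VF21 lb m ^ k) (Finsupp.single (a, b) 1) =
      lb ^ (((a : ℕ) + k) / m) • Finsupp.single (a + (k : Fin m), b) 1 := by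
  induction k generalizing a with
  | zero => simp [Nat.div_eq_of_lt a.isLt]
  | succ k ih =>
    rw [pow_succ, Module.End.mul_apply, VF21_single, map_smul, ih, smul_smul,
      show a + 1 + (k : Fin m) = a + ((k + 1 : ℕ) : Fin m) by push_cast; ring]
    congr 1
    by_cases ha : (a : ℕ) = m - 1
    · rw [if_pos ha, Fin.val_add_one_eq_mod, show (a : ℕ) + 1 = m by omega, Nat.mod_self,
        show (a : ℕ) + (k + 1) = k + m by omega, Nat.add_div_right _ (NeZero.pos m), pow_succ,
        zero_add, mul_comm]
    · rw [if_neg ha, one_mul, Fin.val_add_one_eq_mod, Nat.mod_eq_of_lt (by omega), add_assoc,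
        add_comm 1 k]

/-- The operator `f ↦ f·Z22·Z11·Z21^(m-1)`. -/
def VFD (q la lb : K) (m : ℕ) [NeZero m] : VermaSpace K m →ₗ[K] VermaSpace K m :=
  (VF21 lb m ^ (m - 1)) ∘ₗ VF11 q la lb m ∘ₗ VF22 m

theorem VFD_single [NeZero m] (i : Fin m × ℕ) :
    VFD q la lb m (Finsupp.single i 1) =
      (lb * la * q ^ (i.1 : ℕ) * (q ^ (i.2 + 1) - 1)) • Finsupp.single i 1 := by
  obtain ⟨a, b⟩ := i
  have hrot : a + 1 + ((m - 1 : ℕ) : Fin m) = a := by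
    rw [add_assoc, ← Nat.cast_one (R := Fin m), ← Nat.cast_add, Nat.add_sub_cancel' (NeZero.pos m),
      Fin.natCast_self, add_zero]
  simp only [VFD, LinearMap.comp_apply, VF22_apply, Finsupp.mapDomain_single, VF11_single_succ,
    map_smul, VF21_pow_single, hrot, smul_smul]
  congr 1
  by_cases ha : (a : ℕ) = m - 1
  · rw [if_pos ha, Fin.val_add_one_eq_mod, show (a : ℕ) + 1 = m by omega, Nat.mod_self, zero_add,
      Nat.div_eq_of_lt (by omega), pow_zero, mul_one]
  · rw [if_neg ha, Fin.val_add_one_eq_mod, Nat.mod_eq_of_lt (by omega),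
      show (a : ℕ) + 1 + (m - 1) = a + m by omega, Nat.add_div_right _ (NeZero.pos m),
      Nat.div_eq_of_lt a.isLt, zero_add, pow_one]
    ring

end Operators

theorem IsPrimitiveRoot.pow_eq_pow_iff_modEq {M : Type*} [CommMonoid M] {ζ : M} {m : ℕ}
    [NeZero m] (hq : IsPrimitiveRoot ζ m) {x y : ℕ} : ζ ^ x = ζ ^ y ↔ x ≡ y [MOD m] := by
  rw [hq.eq_orderOf]
  exact (hq.isOfFinOrder (NeZero.ne m)).pow_eq_pow_iff_modEq

section Submodules

variable {q la lb : K} {m : ℕ}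

theorem Mpm_eq_supported (r : ℕ) :
    Mpm (K := K) m r = Finsupp.supported K K {i | r * m ≤ i.2} := by
  rw [Mpm, Finsupp.supported_eq_span_single]
  congr 1
  ext v
  simp [eq_comm]

theorem mem_Mpm_iff {r : ℕ} {v : VermaSpace K m} :
    v ∈ Mpm m r ↔ ∀ i ∈ v.support, r * m ≤ i.2 := by
  rw [Mpm_eq_supported, Finsupp.mem_supported]
  exact ⟨fun h i hi => h hi, fun h i hi => h i hi⟩

theorem Mpm_zero : Mpm (K := K) m 0 = ⊤ :=
  eq_top_iff.2 fun v _ => mem_Mpm_iff.2 fun i _ => by simp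

theorem VF12_VFD_eigenvalues_eq_iff [NeZero m] (hq : IsPrimitiveRoot q m) (hla : la ≠ 0)
    (hlb : lb ≠ 0) (i j : Fin m × ℕ) :
    (q ^ ((i.1 : ℕ) + i.2) * la = q ^ ((j.1 : ℕ) + j.2) * la ∧
        lb * la * q ^ (i.1 : ℕ) * (q ^ (i.2 + 1) - 1) =
          lb * la * q ^ (j.1 : ℕ) * (q ^ (j.2 + 1) - 1)) ↔
      i.1 = j.1 ∧ i.2 ≡ j.2 [MOD m] := by
  obtain ⟨a, b⟩ := i
  obtain ⟨a', b'⟩ := j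
  constructor
  · rintro ⟨h1, h2⟩
    have e1 : q ^ ((a : ℕ) + b) = q ^ ((a' : ℕ) + b') := mul_right_cancel₀ hla h1
    have e1' : q ^ (a : ℕ) * q ^ b = q ^ (a' : ℕ) * q ^ b' := by rw [← pow_add, ← pow_add, e1]
    -- Given `q^(a+b)`, the `D`-eigenvalue `λ₁λ₂(q^(a+b+1) - q^a)` determines `q^a`.
    have e2 : q ^ (a : ℕ) = q ^ (a' : ℕ) := by
      have := mul_left_cancel₀ (mul_ne_zero hlb hla) (by linear_combination h2 :
        lb * la * (q ^ (a : ℕ) * (q ^ (b + 1) - 1)) = lb * la * (q ^ (a' : ℕ) * (q ^ (b' + 1) - 1)))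
      rw [pow_succ, pow_succ] at this
      linear_combination q * e1' - this
    have ha : a = a' := Fin.ext (hq.pow_inj a.isLt a'.isLt e2)
    subst ha
    exact ⟨rfl, Nat.ModEq.add_left_cancel' _ (hq.pow_eq_pow_iff_modEq.1 e1)⟩
  · rintro ⟨rfl, hb⟩
    have hqb : q ^ b = q ^ b' := hq.pow_eq_pow_iff_modEq.2 hb
    simp [pow_add, pow_succ, hqb]

variable {W : Submodule K (VermaSpace K m)}

theorem filter_residueClass_mem [NeZero m] (hq : IsPrimitiveRoot q m) (hla : la ≠ 0)
    (hlb : lb ≠ 0) (h11 : ∀ v ∈ W, VF11 q la lb m v ∈ W) (h12 : ∀ v ∈ W, VF12 q la m v ∈ W)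
    (h21 : ∀ v ∈ W, VF21 lb m v ∈ W) (h22 : ∀ v ∈ W, VF22 m v ∈ W) (a : Fin m) (b : ℕ)
    {w : VermaSpace K m} (hw : w ∈ W) :
    w.filter (fun i => i.1 = a ∧ i.2 ≡ b [MOD m]) ∈ W := by
  have hD : ∀ v ∈ W, VFD q la lb m v ∈ W := fun v hv =>
    Module.End.pow_apply_mem_of_forall_mem _ h21 _ (h11 _ (h22 v hv))
  have h := filter_mem_of_diagonal VFD_single hD (lb * la * q ^ (a : ℕ) * (q ^ (b + 1) - 1))
    (filter_mem_of_diagonal VF12_single h12 (q ^ ((a : ℕ) + b) * la) hw)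
  convert h using 1
  ext i
  have := VF12_VFD_eigenvalues_eq_iff hq hla hlb i (a, b)
  simp only [Finsupp.filter_apply] at this ⊢
  split_ifs <;> tauto

theorem single_mem_of_single_mem_same_snd [NeZero m] (hlb : lb ≠ 0)
    (h21 : ∀ v ∈ W, VF21 lb m v ∈ W) {a : Fin m} {b : ℕ} (h : Finsupp.single (a, b) 1 ∈ W)
    (a' : Fin m) : Finsupp.single (a', b) 1 ∈ W := by
  have hrot : ∀ k : ℕ, Finsupp.single (a + (k : Fin m), b) 1 ∈ W := by
    intro k
    have hk := Module.End.pow_apply_mem_of_forall_mem k h21 _ h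
    rw [VF21_pow_single] at hk
    simpa [smul_smul, hlb] using W.smul_mem (lb ^ (((a : ℕ) + k) / m))⁻¹ hk
  simpa using hrot (a' - a).val

theorem single_mem_of_le_snd (h22 : ∀ v ∈ W, VF22 m v ∈ W) {a : Fin m} {b b' : ℕ}
    (h : Finsupp.single (a, b) 1 ∈ W) (hb : b ≤ b') : Finsupp.single (a, b') 1 ∈ W := by
  obtain ⟨s, rfl⟩ := Nat.exists_eq_add_of_le hb
  simpa [VF22_pow_apply, Finsupp.mapDomain_single] using
    Module.End.pow_apply_mem_of_forall_mem s h22 _ h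

theorem single_mem_of_single_succ_mem [NeZero m] (hq : IsPrimitiveRoot q m) (hla : la ≠ 0)
    (hlb : lb ≠ 0) (h11 : ∀ v ∈ W, VF11 q la lb m v ∈ W) {a : Fin m} {b : ℕ}
    (h : Finsupp.single (a, b + 1) 1 ∈ W) (hb : ¬ m ∣ b + 1) :
    Finsupp.single (a + 1, b) 1 ∈ W := by
  have h' := h11 _ h
  rw [VF11_single_succ] at h'
  refine (W.smul_mem_iff ?_).1 h'
  have hqb : q ^ (b + 1) ≠ 1 := fun h1 => hb (hq.pow_eq_one_iff_dvd _ |>.1 h1)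
  have hq0 : q ≠ 0 := hq.ne_zero (NeZero.ne m)
  have : (if (a : ℕ) = m - 1 then lb else 1) ≠ 0 := by split_ifs <;> simp [hlb]
  exact mul_ne_zero (mul_ne_zero (mul_ne_zero this hla) (pow_ne_zero _ hq0)) (sub_ne_zero.2 hqb)

/-- Lowering with `Z11` stops only at multiples of `m`. -/
theorem single_div_mul_mem [NeZero m] (hq : IsPrimitiveRoot q m) (hla : la ≠ 0)
    (hlb : lb ≠ 0) (h11 : ∀ v ∈ W, VF11 q la lb m v ∈ W) (h21 : ∀ v ∈ W, VF21 lb m v ∈ W)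
    {a : Fin m} {b : ℕ} (h : Finsupp.single (a, b) 1 ∈ W) :
    Finsupp.single (a, b / m * m) 1 ∈ W := by
  induction b using Nat.strong_induction_on generalizing a with
  | _ b ih =>
    by_cases hdvd : m ∣ b
    · rwa [Nat.div_mul_cancel hdvd]
    obtain ⟨c, rfl⟩ : ∃ c, b = c + 1 :=
      Nat.exists_eq_succ_of_ne_zero fun h0 => hdvd (h0 ▸ dvd_zero m)
    rw [Nat.succ_div_of_not_dvd hdvd]
    exact ih c c.lt_succ_self (single_mem_of_single_mem_same_snd hlb h21
      (single_mem_of_single_succ_mem hq hla hlb h11 h hdvd) a)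

theorem Mpm_div_le_of_single_mem [NeZero m] (hq : IsPrimitiveRoot q m) (hla : la ≠ 0)
    (hlb : lb ≠ 0) (h11 : ∀ v ∈ W, VF11 q la lb m v ∈ W) (h21 : ∀ v ∈ W, VF21 lb m v ∈ W)
    (h22 : ∀ v ∈ W, VF22 m v ∈ W) {a : Fin m} {b : ℕ} (h : Finsupp.single (a, b) 1 ∈ W) :
    Mpm m (b / m) ≤ W := by
  rw [Mpm, Submodule.span_le]
  rintro v ⟨a', b', hb', rfl⟩
  exact single_mem_of_le_snd h22
    (single_mem_of_single_mem_same_snd hlb h21 (single_div_mul_mem hq hla hlb h11 h21 h) a') hb'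

theorem single_add_mem_of_min_snd [NeZero m] (hq : IsPrimitiveRoot q m) (hla : la ≠ 0)
    (hlb : lb ≠ 0) (h11 : ∀ v ∈ W, VF11 q la lb m v ∈ W) (h12 : ∀ v ∈ W, VF12 q la m v ∈ W)
    (h21 : ∀ v ∈ W, VF21 lb m v ∈ W) (h22 : ∀ v ∈ W, VF22 m v ∈ W) {r : ℕ}
    (hr : Mpm m r ≤ W) {w : VermaSpace K m} (hw : w ∈ W) {a : Fin m} {b : ℕ}
    (hab : (a, b) ∈ w.support) (hmin : ∀ i ∈ w.support, b ≤ i.2) {s : ℕ}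
    (hs : r * m ≤ b + s + m) : Finsupp.single (a, b + s) 1 ∈ W := by
  classical
  set shift : Fin m × ℕ → Fin m × ℕ := fun i => (i.1, i.2 + s)
  have hinj : Function.Injective shift := fun i j h => by
    simpa [shift, Prod.ext_iff] using h
  have hv : (w.filter fun i => i.1 = a ∧ i.2 ≡ b [MOD m]).mapDomain shift ∈ W := by
    rw [← VF22_pow_apply]
    exact Module.End.pow_apply_mem_of_forall_mem s h22 _
      (filter_residueClass_mem hq hla hlb h11 h12 h21 h22 a b hw)
  refine Submodule.single_one_mem_of_support_subset (by rwa [Mpm_eq_supported] at hr) hv ?_ ?_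
  · rw [show (a, b + s) = shift (a, b) from rfl, Finsupp.mapDomain_apply hinj,
      Finsupp.filter_apply, if_pos ⟨rfl, rfl⟩]
    exact Finsupp.mem_support_iff.1 hab
  · intro j hj hne
    rw [Finsupp.mapDomain_support_of_injective hinj, Finset.mem_image] at hj
    obtain ⟨⟨a', b'⟩, hj', rfl⟩ := hj
    rw [Finsupp.support_filter, Finset.mem_filter] at hj'
    obtain ⟨hsupp, rfl, hmod⟩ := hj'
    have hbb' : b ≤ b' := hmin _ hsupp
    have hne' : b ≠ b' := by rintro rfl; exact hne rfl
    have : m ≤ b' - b := Nat.le_of_dvd (by omega) ((Nat.modEq_iff_dvd' hbb').1 hmod.symm)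
    change r * m ≤ b' + s
    omega

theorem Mpm_pred_le_of_not_le [NeZero m] (hq : IsPrimitiveRoot q m) (hla : la ≠ 0)
    (hlb : lb ≠ 0) (h11 : ∀ v ∈ W, VF11 q la lb m v ∈ W) (h12 : ∀ v ∈ W, VF12 q la m v ∈ W)
    (h21 : ∀ v ∈ W, VF21 lb m v ∈ W) (h22 : ∀ v ∈ W, VF22 m v ∈ W) {r : ℕ}
    (hr : Mpm m r ≤ W) (hW : ¬ W ≤ Mpm m r) : Mpm m (r - 1) ≤ W := by
  obtain ⟨w, hw, hwr⟩ := SetLike.not_le_iff_exists.1 hW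
  obtain ⟨i, hi, hir⟩ : ∃ i ∈ w.support, i.2 < r * m := by simpa [mem_Mpm_iff] using hwr
  obtain ⟨⟨a, b⟩, hab, hmin⟩ := w.support.exists_min_image Prod.snd ⟨i, hi⟩
  have hb : b < r * m := (hmin i hi).trans_lt hir
  have hbr : b / m < r := Nat.div_lt_of_lt_mul (by rwa [mul_comm] at hb)
  -- Shifting by `s` moves `b` to the level `(r - 1) m + b % m`.
  set s := (r - 1 - b / m) * m with hs
  have hdiv := Nat.div_add_mod' b m
  have hmod := Nat.mod_lt b (NeZero.pos m)
  have hle : b / m * m ≤ (r - 1) * m := Nat.mul_le_mul_right _ (by omega)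
  have hrm : (r - 1) * m + m = r * m := by
    rw [← add_one_mul, Nat.sub_add_cancel (Nat.one_le_of_lt hbr)]
  rw [Nat.sub_mul] at hs
  have hsingle := single_add_mem_of_min_snd hq hla hlb h11 h12 h21 h22 hr hw hab hmin
    (s := s) (by omega)
  have hlevel : (b + s) / m = r - 1 :=
    Nat.div_eq_of_lt_le (by omega) (by rw [add_one_mul]; omega)
  simpa [hlevel] using Mpm_div_le_of_single_mem hq hla hlb h11 h21 h22 hsingle

end Submodules

theorem DDMat2_verma_submodules
    (hq1 : q ^ m = 1) (hq2 : ∀ k : ℕ, 1 ≤ k → k < m → q ^ k ≠ 1)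
    (hla : la ≠ 0) (hlb : lb ≠ 0) (p : ℕ)
    (W : Submodule K (VermaSpace K m))
    (h11 : ∀ v ∈ W, VF11 q la lb m v ∈ W) (h12 : ∀ v ∈ W, VF12 q la m v ∈ W)
    (h21 : ∀ v ∈ W, VF21 lb m v ∈ W) (h22 : ∀ v ∈ W, VF22 (K := K) m v ∈ W)
    (hM : Mpm (K := K) m p ≤ W) :
    W = ⊤ ∨ ∃ r : ℕ, 1 ≤ r ∧ r ≤ p ∧ W = Mpm (K := K) m r := by
  have hq : IsPrimitiveRoot q m := IsPrimitiveRoot.mk_of_lt q (NeZero.pos m) hq1 hq2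
  classical
  have hex : ∃ r, Mpm (K := K) m r ≤ W := ⟨p, hM⟩
  obtain hr0 | hr_pos := Nat.eq_zero_or_pos (Nat.find hex)
  · left
    rw [eq_top_iff, ← Mpm_zero, ← hr0]
    exact Nat.find_spec hex
  · right
    refine ⟨Nat.find hex, hr_pos, Nat.find_min' hex hM, le_antisymm ?_ (Nat.find_spec hex)⟩
    by_contra hW
    exact Nat.find_min hex (Nat.sub_lt hr_pos one_pos)
      (Mpm_pred_le_of_not_le hq hla hlb h11 h12 h21 h22 (Nat.find_spec hex) hW)
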